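/- Let u : ℝ → ℝ be continuous, integrable, and nonnegative, and set a = G₁∗u. Then a is continuously differentiable with a'(x) = ∫_ℝ ∂_xG₁(x−y) u(y) dy, and for every x ∈ ℝ: a(x) ≥ 0, |a'(x)| ≤ a(x), a(x) + a'(x) ≥ 0, and a(x) − a'(x) ≥ 0. -/

import Mathlib

open MeasureTheory

/-- The Green's function `G₁(x) = ½ e^{-|x|}` of `1 - ∂ₓ²`. -/
noncomputable def G1 (x : ℝ) : ℝ := (1 / 2) * Real.exp (-|x|)

/-- The derivative `∂ₓG₁(x) = -½ sgn(x) e^{-|x|}`. -/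
noncomputable def G1x (x : ℝ) : ℝ := -(1 / 2) * Real.sign x * Real.exp (-|x|)

/-- Convolution `(G ∗ f)(x) = ∫ G(x - y) f(y) dy`. -/
noncomputable def conv (G f : ℝ → ℝ) (x : ℝ) : ℝ := ∫ y : ℝ, G (x - y) * f y

lemma G1_nonneg (x : ℝ) : 0 ≤ G1 x := by
  unfold G1; positivity

lemma G1_le_half (x : ℝ) : G1 x ≤ 1 / 2 := by
  unfold G1
  nlinarith [Real.exp_le_one_iff.mpr (neg_nonpos.mpr (abs_nonneg x)), Real.exp_pos (-|x|)]

lemma abs_sign_le (x : ℝ) : |Real.sign x| ≤ 1 := by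
  rcases Real.sign_apply_eq x with h | h | h <;> rw [h] <;> norm_num

lemma abs_G1x_le (x : ℝ) : |G1x x| ≤ G1 x := by
  unfold G1x G1
  rw [abs_mul, abs_mul]
  have h1 : |(-(1 / 2) : ℝ)| = 1 / 2 := by norm_num
  have h2 : |Real.exp (-|x|)| = Real.exp (-|x|) := abs_of_pos (Real.exp_pos _)
  rw [h1, h2]
  nlinarith [abs_sign_le x, abs_nonneg (Real.sign x), Real.exp_pos (-|x|)]

lemma exp_neg_lip {s t : ℝ} (hs : 0 ≤ s) (ht : 0 ≤ t) :
    |Real.exp (-s) - Real.exp (-t)| ≤ |s - t| := by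
  wlog h : s ≤ t generalizing s t
  · rw [abs_sub_comm, abs_sub_comm s t]; exact this ht hs (le_of_not_ge h)
  have h1 : Real.exp (-t) ≤ Real.exp (-s) := Real.exp_le_exp.mpr (by linarith)
  rw [abs_of_nonneg (by linarith), abs_of_nonpos (by linarith)]
  have h2 : Real.exp (-s) - Real.exp (-t) = Real.exp (-s) * (1 - Real.exp (-(t - s))) := by
    rw [mul_sub, mul_one, ← Real.exp_add]; ring_nf
  rw [h2]
  have h3 : Real.exp (-s) ≤ 1 := Real.exp_le_one_iff.mpr (by linarith)
  have h4 : 1 - (t - s) ≤ Real.exp (-(t - s)) := by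
    have := Real.add_one_le_exp (-(t - s)); linarith
  have h5 : 0 ≤ 1 - Real.exp (-(t - s)) := by
    have := Real.exp_le_one_iff.mpr (show -(t - s) ≤ 0 by linarith); linarith
  nlinarith

lemma G1_lip_bound (s t : ℝ) : |G1 s - G1 t| ≤ (1 / 2) * |s - t| := by
  unfold G1
  rw [← mul_sub, abs_mul, abs_of_pos (by norm_num : (0:ℝ) < 1/2)]
  have := exp_neg_lip (abs_nonneg s) (abs_nonneg t)
  have habs : |(|s| - |t|)| ≤ |s - t| := abs_abs_sub_abs_le_abs_sub s t
  nlinarith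

lemma hasDerivAt_G1 {t : ℝ} (ht : t ≠ 0) : HasDerivAt G1 (G1x t) t := by
  rcases ht.lt_or_gt with h | h
  · have hev : (fun x : ℝ => (1 / 2 : ℝ) * Real.exp x) =ᶠ[nhds t] G1 := by
      filter_upwards [Iio_mem_nhds h] with x hx
      simp only [G1, abs_of_neg (Set.mem_Iio.mp hx), neg_neg]
    have hd : HasDerivAt (fun x : ℝ => (1 / 2 : ℝ) * Real.exp x)
        ((1 / 2) * Real.exp t) t := (Real.hasDerivAt_exp t).const_mul _
    have := hd.congr_of_eventuallyEq hev.symm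
    convert this using 1
    · rfl
    · rfl
    simp [G1x, Real.sign_of_neg h, abs_of_neg h]
  · have hev : (fun x : ℝ => (1 / 2 : ℝ) * Real.exp (-x)) =ᶠ[nhds t] G1 := by
      filter_upwards [Ioi_mem_nhds h] with x hx
      simp only [G1, abs_of_pos (Set.mem_Ioi.mp hx)]
    have hd : HasDerivAt (fun x : ℝ => (1 / 2 : ℝ) * Real.exp (-x))
        ((1 / 2) * (Real.exp (-t) * (-1))) t :=
      (((Real.hasDerivAt_exp (-t)).comp t (hasDerivAt_neg t))).const_mul _
    have := hd.congr_of_eventuallyEq hev.symm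
    convert this using 1
    · rfl
    · rfl
    simp [G1x, Real.sign_of_pos h, abs_of_pos h]

lemma measurable_G1x : Measurable G1x := by
  have hs : Measurable Real.sign := by
    unfold Real.sign
    exact Measurable.ite (measurableSet_lt measurable_id measurable_const) measurable_const
      (Measurable.ite (measurableSet_lt measurable_const measurable_id) measurable_const
        measurable_const)
  unfold G1x
  exact (measurable_const.mul hs).mul (Real.measurable_exp.comp measurable_abs.neg)

lemma continuousAt_G1x {t : ℝ} (ht : t ≠ 0) : ContinuousAt G1x t := by
  rcases ht.lt_or_gt with h | h
  · have hev : (fun x : ℝ => (1 / 2 : ℝ) * Real.exp x) =ᶠ[nhds t] G1x := by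
      filter_upwards [Iio_mem_nhds h] with x hx
      have hx' := Set.mem_Iio.mp hx
      simp [G1x, Real.sign_of_neg hx', abs_of_neg hx', neg_neg]
    exact ContinuousAt.congr (by fun_prop) hev
  · have hev : (fun x : ℝ => -(1 / 2 : ℝ) * Real.exp (-x)) =ᶠ[nhds t] G1x := by
      filter_upwards [Ioi_mem_nhds h] with x hx
      have hx' := Set.mem_Ioi.mp hx
      simp [G1x, Real.sign_of_pos hx', abs_of_pos hx']
    exact ContinuousAt.congr (by fun_prop) hev

lemma G1_add_G1x_nonneg (x : ℝ) : 0 ≤ G1 x + G1x x := by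
  unfold G1 G1x
  have h := Real.exp_pos (-|x|)
  rcases Real.sign_apply_eq x with hs | hs | hs <;> rw [hs] <;> nlinarith

lemma G1_sub_G1x_nonneg (x : ℝ) : 0 ≤ G1 x - G1x x := by
  unfold G1 G1x
  have h := Real.exp_pos (-|x|)
  rcases Real.sign_apply_eq x with hs | hs | hs <;> rw [hs] <;> nlinarith

lemma lip_F (y c : ℝ) :
    LipschitzWith (Real.nnabs ((1 / 2) * |c|)) (fun x => G1 (x - y) * c) := by
  rw [lipschitzWith_iff_dist_le_mul]
  intro s t
  simp only [Real.dist_eq, Real.coe_nnabs]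
  have h1 : G1 (s - y) * c - G1 (t - y) * c = (G1 (s - y) - G1 (t - y)) * c := by ring
  rw [h1, abs_mul]
  have h2 := G1_lip_bound (s - y) (t - y)
  have h3 : s - y - (t - y) = s - t := by ring
  rw [h3] at h2
  have h4 : abs ((1 / 2 : ℝ) * |c|) = (1 / 2) * |c| := abs_of_nonneg (by positivity)
  rw [h4]
  nlinarith [abs_nonneg c, abs_nonneg (s - t)]

lemma continuous_G1 : Continuous G1 := by
  unfold G1; fun_prop

lemma integrable_G1_conv {u : ℝ → ℝ} (huc : Continuous u) (hui : Integrable u) (x : ℝ) :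
    Integrable (fun y => G1 (x - y) * u y) := by
  refine (hui.norm.const_mul (1 / 2)).mono' ?_ ?_
  · exact ((continuous_G1.comp (continuous_const.sub continuous_id)).mul huc).aestronglyMeasurable
  · refine Filter.Eventually.of_forall fun y => ?_
    rw [Real.norm_eq_abs, abs_mul, Real.norm_eq_abs]
    have h1 : |G1 (x - y)| = G1 (x - y) := abs_of_nonneg (G1_nonneg _)
    rw [h1]
    nlinarith [G1_le_half (x - y), abs_nonneg (u y), G1_nonneg (x - y)]

lemma key_deriv {u : ℝ → ℝ} (huc : Continuous u) (hui : Integrable u) (x₀ : ℝ) :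
    Integrable (fun y => G1x (x₀ - y) * u y) ∧
      HasDerivAt (conv G1 u) (conv G1x u x₀) x₀ := by
  have h0 : ∀ᵐ (y : ℝ), y ≠ x₀ := by
    rw [ae_iff]
    simpa using measure_singleton (μ := (volume : Measure ℝ)) x₀
  have := hasDerivAt_integral_of_dominated_loc_of_lip
    (μ := (volume : Measure ℝ)) (𝕜 := ℝ)
    (F := fun x y => G1 (x - y) * u y) (F' := fun y => G1x (x₀ - y) * u y)
    (bound := fun y => (1 / 2) * |u y|) (x₀ := x₀) Filter.univ_mem
    (Filter.Eventually.of_forall fun x =>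
      ((continuous_G1.comp (continuous_const.sub continuous_id)).mul huc).aestronglyMeasurable)
    (integrable_G1_conv huc hui x₀)
    (((measurable_G1x.comp (measurable_const.sub measurable_id)).mul
      huc.measurable).aestronglyMeasurable)
    (Filter.Eventually.of_forall fun y => (lip_F y (u y)).lipschitzOnWith)
    (by simpa [abs_eq_self] using hui.norm.const_mul (1 / 2))
    ?_
  · exact this
  · filter_upwards [h0] with y hy
    have h1 : HasDerivAt (fun x => G1 (x - y)) (G1x (x₀ - y)) x₀ := by
      have h2 := (hasDerivAt_G1 (sub_ne_zero.mpr hy.symm)).comp x₀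
        ((hasDerivAt_id x₀).sub_const y)
      simpa [Function.comp_def] using h2
    exact h1.mul_const (u y)

lemma cont_conv_G1x {u : ℝ → ℝ} (huc : Continuous u) (hui : Integrable u) :
    Continuous (conv G1x u) := by
  rw [continuous_iff_continuousAt]
  intro x₀
  have h0 : ∀ᵐ (y : ℝ), y ≠ x₀ := by
    rw [ae_iff]
    simpa using measure_singleton (μ := (volume : Measure ℝ)) x₀
  refine continuousAt_of_dominated (bound := fun y => (1 / 2) * ‖u y‖) ?_ ?_ ?_ ?_
  · exact Filter.Eventually.of_forall fun x =>
      ((measurable_G1x.comp (measurable_const.sub measurable_id)).mul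
        huc.measurable).aestronglyMeasurable
  · refine Filter.Eventually.of_forall fun x => Filter.Eventually.of_forall fun y => ?_
    simp only [Real.norm_eq_abs, abs_mul]
    nlinarith [abs_G1x_le (x - y), G1_le_half (x - y), abs_nonneg (u y),
      abs_nonneg (G1x (x - y))]
  · exact hui.norm.const_mul (1 / 2)
  · filter_upwards [h0] with y hy
    have hc := ContinuousAt.comp (g := G1x) (f := fun x : ℝ => x - y) (x := x₀)
      (continuousAt_G1x (show x₀ - y ≠ 0 from sub_ne_zero.mpr hy.symm))
      (continuousAt_id.sub continuousAt_const)
    exact hc.mul continuousAt_const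

/-- If `u` is continuous, integrable and nonnegative and `a = G₁ ∗ u`, then
`a` is continuously differentiable with `a' = ∂ₓG₁ ∗ u`, and `a ≥ 0`, `|a'| ≤ a`,
`a + a' ≥ 0`, `a - a' ≥ 0` everywhere. -/
theorem pointwise_bounds_of_G1_conv (u : ℝ → ℝ) (huc : Continuous u)
    (hui : Integrable u) (hu0 : ∀ x, 0 ≤ u x) (a : ℝ → ℝ) (ha : a = conv G1 u) :
    (∀ x : ℝ, HasDerivAt a (conv G1x u x) x) ∧ Continuous (deriv a) ∧
      ∀ x : ℝ, 0 ≤ a x ∧ |deriv a x| ≤ a x ∧ 0 ≤ a x + deriv a x ∧ 0 ≤ a x - deriv a x := by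
  subst ha
  have hkey := fun x => key_deriv huc hui x
  have hd : ∀ x : ℝ, HasDerivAt (conv G1 u) (conv G1x u x) x := fun x => (hkey x).2
  have hderiv : deriv (conv G1 u) = conv G1x u := funext fun x => (hd x).deriv
  refine ⟨hd, by rw [hderiv]; exact cont_conv_G1x huc hui, fun x => ?_⟩
  have hint1 : Integrable (fun y => G1 (x - y) * u y) := integrable_G1_conv huc hui x
  have hint2 : Integrable (fun y => G1x (x - y) * u y) := (hkey x).1
  have ha0 : 0 ≤ conv G1 u x :=
    integral_nonneg fun y => mul_nonneg (G1_nonneg _) (hu0 y)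
  have hda : deriv (conv G1 u) x = conv G1x u x := by rw [hderiv]
  refine ⟨ha0, ?_, ?_, ?_⟩
  · rw [hda]
    calc |conv G1x u x| ≤ ∫ y, ‖G1x (x - y) * u y‖ := by
          rw [show |conv G1x u x| = ‖conv G1x u x‖ from (Real.norm_eq_abs _).symm]
          exact norm_integral_le_integral_norm _
      _ ≤ ∫ y, G1 (x - y) * u y := by
          refine integral_mono hint2.norm hint1 fun y => ?_
          rw [Real.norm_eq_abs, abs_mul, abs_of_nonneg (hu0 y)]
          exact mul_le_mul_of_nonneg_right (abs_G1x_le _) (hu0 y)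
      _ = conv G1 u x := rfl
  · rw [hda]
    have heq : conv G1 u x + conv G1x u x
        = ∫ y, (G1 (x - y) * u y + G1x (x - y) * u y) := (integral_add hint1 hint2).symm
    rw [heq]
    refine integral_nonneg fun y => ?_
    calc (0:ℝ) ≤ (G1 (x - y) + G1x (x - y)) * u y :=
          mul_nonneg (G1_add_G1x_nonneg _) (hu0 y)
      _ = G1 (x - y) * u y + G1x (x - y) * u y := by ring
  · rw [hda]
    have heq : conv G1 u x - conv G1x u x
        = ∫ y, (G1 (x - y) * u y - G1x (x - y) * u y) := (integral_sub hint1 hint2).symm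
    rw [heq]
    refine integral_nonneg fun y => ?_
    calc (0:ℝ) ≤ (G1 (x - y) - G1x (x - y)) * u y :=
          mul_nonneg (G1_sub_G1x_nonneg _) (hu0 y)
      _ = G1 (x - y) * u y - G1x (x - y) * u y := by ring
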